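/- Given a jump kernel J(X, dY) = Σᵢ K(i|n) δ_{del(X,i)}(dY) where del deletes component i from an n-component state, and marginal densities p_t on each fixed-dimension stratum, the kernel K̂(Y, dX) ∝ p_t(X) K(i|n+1) δ_{ins(Y, y_add, i)}(X) satisfies the detailed flux equation E[1_A(X_t) J(X_t, B)] = E[1_B(X_t) K̂(X_t, A)] for all measurable sets A, B. -/

import Mathlib

/-!
Fix the number `n + 1` of components of `X` and the deleted index `i`. The map
`x ↦ (x i, Fin.removeNth i x)` is a measure-preserving bijection onto `ℝ^d × ℝ^{nd}` with
inverse `(a, y) ↦ Fin.insertNth i a y`, so by Tonelli the integral of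
`1_A(x) p_t(x) K(i|n+1) 1_B(del(x, i))` becomes an integral over `y` of `1_B(y)` times the
integral over the inserted component `a`, which is the `i`-th summand of `p_t(y) K̂(y, A)`.
The normalisation `1 / p_t(y)` of `K̂` cancels against the density because `p_t > 0`.
-/

open MeasureTheory
open scoped ENNReal

/-- The trans-dimensional state space `𝒳 = ⋃_{n=1}^N {n} × ℝ^{nd}`, realized as the
sigma type of tuples of `d`-dimensional components. -/
abbrev TransSpace (d : ℕ) := (n : ℕ) × (Fin n → EuclideanSpace ℝ (Fin d))

theorem measurable_sigmaMk {ι : Type*} {β : ι → Type*} [∀ i, MeasurableSpace (β i)] (i : ι) :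
    Measurable (Sigma.mk i : β i → Sigma β) :=
  measurable_iff_le_map.2 (iInf_le _ i)

namespace Fin

variable {α : Type*} {n : ℕ}

theorem measurable_insertNth [MeasurableSpace α] (i : Fin (n + 1)) :
    Measurable fun z : α × (Fin n → α) => (i.insertNth z.1 z.2 : Fin (n + 1) → α) :=
  (MeasurableEquiv.piFinSuccAbove (fun _ => α) i).symm.measurable

theorem measurable_removeNth [MeasurableSpace α] (i : Fin (n + 1)) :
    Measurable fun x : Fin (n + 1) → α => i.removeNth x :=
  measurable_pi_iff.2 fun _ => measurable_pi_apply _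

variable [MeasureSpace α] [SigmaFinite (volume : Measure α)]

theorem lintegral_eq_lintegral_lintegral_insertNth (i : Fin (n + 1))
    {f : (Fin (n + 1) → α) → ℝ≥0∞} (hf : Measurable f) :
    ∫⁻ x, f x = ∫⁻ y, ∫⁻ a, f (i.insertNth a y) := by
  rw [← (volume_preserving_piFinSuccAbove (fun _ => α) i).symm.lintegral_comp hf,
    Measure.volume_eq_prod]
  exact lintegral_prod_symm _ (hf.comp (measurable_insertNth i)).aemeasurable

theorem lintegral_mul_comp_removeNth (i : Fin (n + 1)) {f : (Fin (n + 1) → α) → ℝ≥0∞}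
    {g : (Fin n → α) → ℝ≥0∞} (hf : Measurable f) (hg : Measurable g) :
    ∫⁻ x, f x * g (i.removeNth x) = ∫⁻ y, g y * ∫⁻ a, f (i.insertNth a y) := by
  have hfg : Measurable fun x => f x * g (i.removeNth x) :=
    hf.mul (hg.comp (measurable_removeNth i))
  rw [lintegral_eq_lintegral_lintegral_insertNth i hfg]
  refine lintegral_congr fun y => ?_
  simp_rw [removeNth_insertNth]
  rw [mul_comm]
  exact lintegral_mul_const _
    (hf.comp ((measurable_insertNth i).comp (measurable_id.prodMk measurable_const)))

theorem measurable_lintegral_insertNth (i : Fin (n + 1)) {f : (Fin (n + 1) → α) → ℝ≥0∞}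
    (hf : Measurable f) : Measurable fun y => ∫⁻ a, f (i.insertNth a y) :=
  (hf.comp (measurable_insertNth i)).lintegral_prod_left'

end Fin

theorem stmt_9_general (d N : ℕ)
    (p : (n : ℕ) → (Fin n → EuclideanSpace ℝ (Fin d)) → ℝ)
    (hp_meas : ∀ n, Measurable (p n)) (hp_pos : ∀ n x, 0 < p n x)
    (K : (n : ℕ) → Fin n → ℝ)
    (A B : Set (TransSpace d)) (hA : MeasurableSet A) (hB : MeasurableSet B) :
    -- E[1_A(X_t) J(X_t, B)]
    (∑ n ∈ Finset.Icc 1 (N - 1),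
      ∫⁻ x : Fin (n + 1) → EuclideanSpace ℝ (Fin d),
        A.indicator (fun _ => (1 : ℝ≥0∞)) ⟨n + 1, x⟩ *
        (∑ i : Fin (n + 1), ENNReal.ofReal (K (n + 1) i) *
          B.indicator (fun _ => (1 : ℝ≥0∞)) ⟨n, fun j => x (i.succAbove j)⟩) *
        ENNReal.ofReal (p (n + 1) x))
    -- E[1_B(X_t) K̂(X_t, A)]
    = ∑ n ∈ Finset.Icc 1 (N - 1),
      ∫⁻ y : Fin n → EuclideanSpace ℝ (Fin d),
        B.indicator (fun _ => (1 : ℝ≥0∞)) ⟨n, y⟩ *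
        ((∑ i : Fin (n + 1), ∫⁻ yadd : EuclideanSpace ℝ (Fin d),
            A.indicator (fun _ => (1 : ℝ≥0∞)) ⟨n + 1, i.insertNth yadd y⟩ *
            ENNReal.ofReal (p (n + 1) (i.insertNth yadd y)) *
            ENNReal.ofReal (K (n + 1) i)) / ENNReal.ofReal (p n y)) *
        ENNReal.ofReal (p n y) := by
  refine Finset.sum_congr rfl fun n _ => ?_
  set f : Fin (n + 1) → (Fin (n + 1) → EuclideanSpace ℝ (Fin d)) → ℝ≥0∞ := fun i x =>
    A.indicator (fun _ => 1) ⟨n + 1, x⟩ * ENNReal.ofReal (p (n + 1) x) *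
      ENNReal.ofReal (K (n + 1) i)
  set g : (Fin n → EuclideanSpace ℝ (Fin d)) → ℝ≥0∞ := fun y => B.indicator (fun _ => 1) ⟨n, y⟩
  have hf : ∀ i, Measurable (f i) := fun i =>
    ((measurable_const.indicator (measurable_sigmaMk _ hA)).mul
      (hp_meas _).ennreal_ofReal).mul_const _
  have hg : Measurable g := measurable_const.indicator (measurable_sigmaMk _ hB)
  calc _ = ∑ i, ∫⁻ x, f i x * g (i.removeNth x) := by
        refine (lintegral_congr fun x => ?_).trans (lintegral_finsetSum _ fun i _ =>
          (hf i).mul (hg.comp (Fin.measurable_removeNth i)))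
        simp only [Finset.mul_sum, Finset.sum_mul]
        refine Finset.sum_congr rfl fun i _ => ?_
        -- `ring` fails here: `i.removeNth x` is only defeq to `fun j => x (i.succAbove j)`
        have reorder (a b c e : ℝ≥0∞) : a * (b * c) * e = a * e * b * c := by ring
        exact reorder _ _ _ _
    _ = ∑ i, ∫⁻ y, g y * ∫⁻ a, f i (i.insertNth a y) := by
        simp_rw [Fin.lintegral_mul_comp_removeNth _ (hf _) hg]
    _ = _ := by
        refine (lintegral_finsetSum _ fun i _ =>
          hg.mul (Fin.measurable_lintegral_insertNth i (hf i))).symm.trans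
          (lintegral_congr fun y => ?_)
        have hpy : ENNReal.ofReal (p n y) ≠ 0 := ENNReal.ofReal_ne_zero_iff.2 (hp_pos n y)
        rw [mul_assoc, ENNReal.div_mul_cancel hpy ENNReal.ofReal_ne_top, Finset.mul_sum]
        rfl

/-- Detailed flux equation: for the deletion jump kernel
`J(X, dY) = Σᵢ K(i|n) δ_{del(X,i)}(dY)` (where `del (n+1, x) i = (n, x ∘ i.succAbove)`
deletes the `i`-th component) and marginal densities `p_t` on each fixed-dimension
stratum, the kernel `K̂(Y, dX) ∝ p_t(X) K(i|n+1) δ_{ins(Y, y_add, i)}(X)` satisfies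
`E[1_A(X_t) J(X_t, B)] = E[1_B(X_t) K̂(X_t, A)]` for all measurable sets `A, B`. -/
theorem stmt_9 (d N : ℕ)
    (p : (n : ℕ) → (Fin n → EuclideanSpace ℝ (Fin d)) → ℝ)
    (hp_meas : ∀ n, Measurable (p n)) (hp_pos : ∀ n x, 0 < p n x)
    (K : (n : ℕ) → Fin n → ℝ)
    (hK0 : ∀ n i, 0 ≤ K n i) (hK1 : ∀ n, 1 ≤ n → ∑ i, K n i = 1)
    (A B : Set (TransSpace d)) (hA : MeasurableSet A) (hB : MeasurableSet B) :
    -- E[1_A(X_t) J(X_t, B)]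
    (∑ n ∈ Finset.Icc 1 (N - 1),
      ∫⁻ x : Fin (n + 1) → EuclideanSpace ℝ (Fin d),
        A.indicator (fun _ => (1 : ℝ≥0∞)) ⟨n + 1, x⟩ *
        (∑ i : Fin (n + 1), ENNReal.ofReal (K (n + 1) i) *
          B.indicator (fun _ => (1 : ℝ≥0∞)) ⟨n, fun j => x (i.succAbove j)⟩) *
        ENNReal.ofReal (p (n + 1) x))
    -- E[1_B(X_t) K̂(X_t, A)]
    = ∑ n ∈ Finset.Icc 1 (N - 1),
      ∫⁻ y : Fin n → EuclideanSpace ℝ (Fin d),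
        B.indicator (fun _ => (1 : ℝ≥0∞)) ⟨n, y⟩ *
        ((∑ i : Fin (n + 1), ∫⁻ yadd : EuclideanSpace ℝ (Fin d),
            A.indicator (fun _ => (1 : ℝ≥0∞)) ⟨n + 1, i.insertNth yadd y⟩ *
            ENNReal.ofReal (p (n + 1) (i.insertNth yadd y)) *
            ENNReal.ofReal (K (n + 1) i)) / ENNReal.ofReal (p n y)) *
        ENNReal.ofReal (p n y) :=
  stmt_9_general d N p hp_meas hp_pos K A B hA hB
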